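/- Let K be a field of characteristic 0, α ∈ K, and (A_n)_{n≥0} a sequence in M_l(K) with A_0 = I. If for all n ≥ 0 the identity Σ_{i,j≥0} A_{n+i} A_j (-1)^i (1-αX)^{-n-i} X^i/i! X^j/j! = A_n holds in M_l(K[[X]]), then A_{n+1} = A_n·(nα·I + A_1) for all n ≥ 0, hence A_{n+1} = ∏_{i=0}^{n}(iα·I + A_1). -/

import Mathlib

/-!
Only the coefficient of `X` is needed. The series `(1 - αX)^{-m}` contributes `m α X` there, so
the coefficient of `X` on the left is `nα A_n A_0 + A_n A_1 - A_{n+1} A_0`, while the right-hand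
side is constant. With `A_0 = 1` this is the recurrence, and the product formula follows by
induction.
-/

open PowerSeries Finset

variable {K : Type*} [Field K] [CharZero K] {l : ℕ}

/-- `ascProdFrom B α n = ∏_{i=0}^{n-1} (i·α·I + B)` (product of the factors
`iα·I + B` for `0 ≤ i ≤ n-1`, in increasing order). -/
def ascProdFrom (B : Matrix (Fin l) (Fin l) K) (α : K) : ℕ → Matrix (Fin l) (Fin l) K
  | 0 => 1
  | n + 1 => ascProdFrom B α n * (((n : K) * α) • (1 : Matrix (Fin l) (Fin l) K) + B)

section Cocycle

variable {F R : Type*} [Field F] [Ring R] [Algebra F R]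

/-- The left-hand side of the hypothesis, `Σ_{i,j} A_{n+i} A_j (-1)^i (1-αX)^{-n-i} X^i/i! X^j/j!`,
expanded coefficientwise using `(1-αX)^{-m} = Σ_k C(m+k-1, k) α^k X^k`. -/
def cocycleSeries (α : F) (A : ℕ → R) (n : ℕ) : R⟦X⟧ :=
  PowerSeries.mk fun N =>
    ∑ i ∈ range (N + 1), ∑ j ∈ range (N + 1 - i),
      (((-1 : F) ^ i * (((n + i) + (N - i - j) - 1).choose (N - i - j) : F) * α ^ (N - i - j)
          * ((Nat.factorial i : F) * (Nat.factorial j : F))⁻¹) •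
        (A (n + i) * A j))

theorem coeff_one_cocycleSeries (α : F) (A : ℕ → R) (n : ℕ) :
    coeff 1 (cocycleSeries α A n) = ((n : F) * α) • (A n * A 0) + A n * A 1 - A (n + 1) * A 0 := by
  simp only [cocycleSeries, coeff_mk, sum_range_succ, sum_range_zero]
  norm_num
  abel

theorem succ_eq_mul_of_cocycleSeries_eq_C {α : F} {A : ℕ → R} (hA0 : A 0 = 1) {n : ℕ}
    (h : cocycleSeries α A n = C (A n)) : A (n + 1) = A n * (((n : F) * α) • (1 : R) + A 1) := by
  have hX := congrArg (coeff 1) h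
  rw [coeff_one_cocycleSeries, coeff_C, if_neg one_ne_zero, hA0, mul_one, mul_one,
    sub_eq_zero] at hX
  rw [← hX, mul_add, mul_smul_comm, mul_one]

theorem eq_ascProdFrom_of_succ_eq {α : F} {A : ℕ → Matrix (Fin l) (Fin l) F} (hA0 : A 0 = 1)
    (hrec : ∀ n : ℕ, A (n + 1) = A n * (((n : F) * α) • (1 : Matrix (Fin l) (Fin l) F) + A 1)) :
    ∀ n, A n = ascProdFrom (A 1) α n
  | 0 => hA0
  | n + 1 => by rw [hrec n, eq_ascProdFrom_of_succ_eq hA0 hrec n, ascProdFrom]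

end Cocycle

/-- if `A_0 = I` and the family `(A_n)` satisfies, for every `n ≥ 0`,
the identity `Σ_{i,j≥0} A_{n+i} A_j (-1)^i (1-αX)^{-n-i} X^i/i! X^j/j! = A_n`
in `M_l(K[[X]])` (written coefficientwise), then `A_{n+1} = A_n·(nα·I + A_1)`
for all `n`, hence `A_{n+1} = ∏_{i=0}^{n}(iα·I + A_1)`. -/
theorem statement3 (α : K) (A : ℕ → Matrix (Fin l) (Fin l) K)
    (hA0 : A 0 = 1)
    (hcocycle : ∀ n : ℕ,
      (PowerSeries.mk fun N =>
        ∑ i ∈ Finset.range (N + 1), ∑ j ∈ Finset.range (N + 1 - i),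
          (((-1 : K) ^ i * (((n + i) + (N - i - j) - 1).choose (N - i - j) : K)
              * α ^ (N - i - j)
              * ((Nat.factorial i : K) * (Nat.factorial j : K))⁻¹) •
            (A (n + i) * A j)))
        = PowerSeries.C (A n)) :
    (∀ n : ℕ, A (n + 1) = A n * (((n : K) * α) • (1 : Matrix (Fin l) (Fin l) K) + A 1)) ∧
    (∀ n : ℕ, A (n + 1) = ascProdFrom (A 1) α (n + 1)) := by
  have hrec n := succ_eq_mul_of_cocycleSeries_eq_C hA0 (hcocycle n)
  exact ⟨hrec, fun n => eq_ascProdFrom_of_succ_eq hA0 hrec (n + 1)⟩
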